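/- The normal-inverse Gaussian density arises as an inverse-Gaussian mixture of normals: for Σ positive definite, κ > 0, μ, α ∈ ℝ^d, and v ∈ ℝ^d, ∫₀^∞ φ(v; μ + wα, wΣ) · (1/√(2π)) e^{κ} w^{-3/2} exp(-(1/w + κ²w)/2) dw = [2 exp((v−μ)ᵀΣ^{-1}α + κ)/((2π)^{(d+1)/2}|Σ|^{1/2})] · ((δ+1)/(ρ+κ²))^{-(1+d)/4} · K_{-(1+d)/2}(√((ρ+κ²)(δ+1))), where δ = (v−μ)ᵀΣ^{-1}(v−μ) and ρ = αᵀΣ^{-1}α. -/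

import Mathlib

/-!
For `w > 0` the normal density with mean `μ + wα` and covariance `wΣ` equals
`(2π)^(-d/2) |Σ|^(-1/2) w^(-d/2) exp(γ - (δ/w + ρw)/2)` with `γ = (v-μ)ᵀΣ⁻¹α`.
Multiplying by the inverse-Gaussian density therefore leaves, up to a constant, the generalized
inverse-Gaussian kernel `w^(λ-1) exp(-(a/w + bw)/2)` with `λ = -(1+d)/2`, `a = δ + 1`, `b = ρ + κ²`, and
the substitution `w = √(a/b) x` identifies its integral with `2 (a/b)^(λ/2) K_λ(√(ab))`.
-/

open MeasureTheory Real Matrix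

/-- The modified Bessel function of the third kind, defined by its integral representation. -/
noncomputable def besselK (l u : ℝ) : ℝ :=
  (1/2) * ∫ w in Set.Ioi (0:ℝ), w ^ (l - 1) * Real.exp (-(u/2) * (w + 1/w))

/-- Density of the `d`-variate normal distribution `N(m, C)`. -/
noncomputable def mvnPdf (d : ℕ) (m : Fin d → ℝ) (C : Matrix (Fin d) (Fin d) ℝ)
    (x : Fin d → ℝ) : ℝ :=
  (2 * Real.pi) ^ (-(d:ℝ)/2) * C.det ^ (-(1:ℝ)/2) *
    Real.exp (-(1/2) * ((x - m) ⬝ᵥ (C⁻¹ *ᵥ (x - m))))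

/-- The scaling `w = √(a/b) x` turns `a / w + b w` into `√(ab) (x + 1/x)`. -/
theorem integral_rpow_mul_exp_div_add_mul_eq_besselK (l : ℝ) {a b : ℝ} (ha : 0 < a)
    (hb : 0 < b) :
    ∫ w in Set.Ioi (0:ℝ), w ^ (l - 1) * Real.exp (-((a / w + b * w) / 2)) =
      2 * (a / b) ^ (l / 2) * besselK l (Real.sqrt (a * b)) := by
  set s := Real.sqrt (a / b)
  set u := Real.sqrt (a * b)
  have hs : 0 < s := Real.sqrt_pos.mpr (div_pos ha hb)
  have hsu : s * u = a := by
    rw [← Real.sqrt_mul (div_pos ha hb).le, show a / b * (a * b) = a ^ 2 by field_simp,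
      Real.sqrt_sq ha.le]
  have hbs : b * s = u := by
    rw [← Real.sqrt_sq hb.le, ← Real.sqrt_mul (sq_nonneg b)]
    congr 1
    field_simp
  have hscaled : ∀ x ∈ Set.Ioi (0:ℝ),
      (s * x) ^ (l - 1) * Real.exp (-((a / (s * x) + b * (s * x)) / 2)) =
        s ^ (l - 1) * (x ^ (l - 1) * Real.exp (-(u / 2) * (x + 1 / x))) := by
    intro x hx
    rw [Real.mul_rpow hs.le (le_of_lt hx), ← hsu, mul_div_mul_left u x hs.ne',
      ← mul_assoc b, hbs]
    ring_nf
  have hspow : s * s ^ (l - 1) = (a / b) ^ (l / 2) := by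
    rw [mul_comm, ← Real.rpow_add_one hs.ne', sub_add_cancel,
      show s = (a / b) ^ (1 / 2 : ℝ) from Real.sqrt_eq_rpow _,
      ← Real.rpow_mul (div_pos ha hb).le, one_div_mul_eq_div]
  have hsubst := integral_comp_mul_left_Ioi'
    (fun w => w ^ (l - 1) * Real.exp (-((a / w + b * w) / 2))) 0 hs
  rw [mul_zero] at hsubst
  rw [← hsubst, smul_eq_mul, setIntegral_congr_fun measurableSet_Ioi hscaled,
    integral_const_mul, besselK, ← mul_assoc, hspow]
  ring

theorem dotProduct_mulVec_sub_smul {R n : Type*} [CommRing R] [Fintype n]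
    {A : Matrix n n R} (hA : A.IsSymm) (x a : n → R) (t : R) :
    (x - t • a) ⬝ᵥ (A *ᵥ (x - t • a)) =
      x ⬝ᵥ (A *ᵥ x) - 2 * t * (x ⬝ᵥ (A *ᵥ a)) + t ^ 2 * (a ⬝ᵥ (A *ᵥ a)) := by
  have hsymm : a ⬝ᵥ (A *ᵥ x) = x ⬝ᵥ (A *ᵥ a) := by
    rw [dotProduct_mulVec, dotProduct_comm, ← vecMul_transpose, hA.eq]
  simp only [mulVec_sub, mulVec_smul, sub_dotProduct, dotProduct_sub, smul_dotProduct,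
    dotProduct_smul, smul_eq_mul, hsymm]
  ring

theorem Matrix.PosDef.isSymm_inv {n : Type*} [Fintype n] [DecidableEq n]
    {S : Matrix n n ℝ} (hS : S.PosDef) : (S⁻¹).IsSymm := by
  simpa [IsHermitian, IsSymm, conjTranspose_eq_transpose_of_trivial] using hS.inv.isHermitian

theorem mvnPdf_add_smul_smul {d : ℕ} {S : Matrix (Fin d) (Fin d) ℝ} (hS : S.PosDef) {w : ℝ}
    (hw : 0 < w) (μ α v : Fin d → ℝ) :
    mvnPdf d (μ + w • α) (w • S) v =
      (2 * π) ^ (-(d:ℝ)/2) * S.det ^ (-(1:ℝ)/2) * w ^ (-(d:ℝ)/2) *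
        exp ((v - μ) ⬝ᵥ (S⁻¹ *ᵥ α) -
          ((v - μ) ⬝ᵥ (S⁻¹ *ᵥ (v - μ)) / w + w * (α ⬝ᵥ (S⁻¹ *ᵥ α))) / 2) := by
  have hdet : (w • S).det ^ (-(1:ℝ)/2) = S.det ^ (-(1:ℝ)/2) * w ^ (-(d:ℝ)/2) := by
    rw [det_smul, Fintype.card_fin, ← Real.rpow_natCast,
      Real.mul_rpow (by positivity) hS.det_pos.le, ← Real.rpow_mul hw.le, mul_comm]
    ring_nf
  have hinv : (w • S)⁻¹ = w⁻¹ • S⁻¹ :=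
    inv_smul' S (Units.mk0 w hw.ne') hS.det_pos.ne'.isUnit
  rw [mvnPdf, hdet, hinv, show v - (μ + w • α) = (v - μ) - w • α by abel, smul_mulVec,
    dotProduct_smul, dotProduct_mulVec_sub_smul hS.isSymm_inv, smul_eq_mul, mul_assoc _ _ (w ^ _)]
  congr 3
  field_simp
  ring

/-- The inverse-Gaussian density `h(w; 1, κ)` of `IN(1, κ)`. -/
noncomputable def invGaussPdf (κ w : ℝ) : ℝ :=
  (1 / √(2 * π)) * exp κ * w ^ (-(3:ℝ)/2) * exp (-(1/w + κ^2 * w) / 2)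

theorem mvnPdf_mul_invGaussPdf {d : ℕ} (μ α v : Fin d → ℝ) {S : Matrix (Fin d) (Fin d) ℝ}
    (hS : S.PosDef) (κ : ℝ) {ρ δ : ℝ} (hρ : ρ = α ⬝ᵥ (S⁻¹ *ᵥ α))
    (hδ : δ = (v - μ) ⬝ᵥ (S⁻¹ *ᵥ (v - μ))) {w : ℝ} (hw : 0 < w) :
    mvnPdf d (μ + w • α) (w • S) v * invGaussPdf κ w =
      exp ((v - μ) ⬝ᵥ (S⁻¹ *ᵥ α) + κ) / ((2 * π) ^ (((d:ℝ) + 1)/2) * √S.det) *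
        (w ^ (-(1 + (d:ℝ))/2 - 1) * exp (-(((δ + 1) / w + (ρ + κ^2) * w) / 2))) := by
  have h2π : (2 * π) ^ (((d:ℝ) + 1)/2) = (2 * π) ^ ((d:ℝ)/2) * √(2 * π) := by
    rw [Real.sqrt_eq_rpow, ← Real.rpow_add (by positivity)]
    ring_nf
  have hwpow : w ^ (-(1 + (d:ℝ))/2 - 1) = w ^ (-(d:ℝ)/2) * w ^ (-(3:ℝ)/2) := by
    rw [← Real.rpow_add hw]
    ring_nf
  have hneg_half : ∀ {x : ℝ} (y : ℝ), 0 < x → x ^ (-y / 2) = (x ^ (y / 2))⁻¹ :=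
    fun y hx => by rw [neg_div, Real.rpow_neg hx.le]
  simp only [mvnPdf_add_smul_smul hS hw, invGaussPdf, ← hρ, ← hδ, h2π, hwpow,
    hneg_half _ (by positivity : (0:ℝ) < 2 * π), hneg_half _ hS.det_pos, ← Real.sqrt_eq_rpow]
  set γ := (v - μ) ⬝ᵥ (S⁻¹ *ᵥ α)
  have hexponent : -(((δ + 1) / w + (ρ + κ^2) * w) / 2) =
      (γ - (δ / w + w * ρ) / 2) + κ + -(1 / w + κ^2 * w) / 2 - (γ + κ) := by ring
  rw [hexponent, exp_sub _ (γ + κ), exp_add _ (-(1 / w + κ^2 * w) / 2), exp_add (γ - _) κ]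
  field_simp

/-- The normal-inverse Gaussian density arises as an inverse-Gaussian mixture of normals. -/
theorem nig_density_mixture {d : ℕ} (μ α v : Fin d → ℝ) (S : Matrix (Fin d) (Fin d) ℝ)
    (hS : S.PosDef) (κ : ℝ) (hκ : 0 < κ)
    (ρ δ : ℝ) (hρ : ρ = α ⬝ᵥ (S⁻¹ *ᵥ α)) (hδ : δ = (v - μ) ⬝ᵥ (S⁻¹ *ᵥ (v - μ))) :
    ∫ w in Set.Ioi (0:ℝ),
        mvnPdf d (μ + w • α) (w • S) v *
          ((1 / Real.sqrt (2 * Real.pi)) * Real.exp κ * w ^ (-(3:ℝ)/2) *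
            Real.exp (-(1/w + κ^2 * w) / 2)) =
      2 * Real.exp ((v - μ) ⬝ᵥ (S⁻¹ *ᵥ α) + κ) /
          ((2 * Real.pi) ^ (((d:ℝ) + 1)/2) * Real.sqrt S.det) *
        ((δ + 1) / (ρ + κ^2)) ^ (-(1 + (d:ℝ))/4) *
        besselK (-(1 + (d:ℝ))/2) (Real.sqrt ((ρ + κ^2) * (δ + 1))) := by
  have hρ0 : 0 ≤ ρ := hρ ▸ by simpa using hS.inv.posSemidef.dotProduct_mulVec_nonneg α
  have hδ0 : 0 ≤ δ := hδ ▸ by simpa using hS.inv.posSemidef.dotProduct_mulVec_nonneg (v - μ)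
  change ∫ w in Set.Ioi (0:ℝ), mvnPdf d (μ + w • α) (w • S) v * invGaussPdf κ w = _
  rw [setIntegral_congr_fun measurableSet_Ioi
      fun w hw => mvnPdf_mul_invGaussPdf μ α v hS κ hρ hδ hw,
    integral_const_mul,
    integral_rpow_mul_exp_div_add_mul_eq_besselK _ (by linarith) (by positivity : 0 < ρ + κ^2),
    mul_comm (δ + 1)]
  ring_nf
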